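/- arXiv:math/9811162 — 3 statements merged into one kernel-verified Lean document; each statement's English description precedes it below -/
import Mathlib

section
/- For all i, j, k in {1,...,m}, set X_1 = a_i a_j, X_2 = b X_1 b, and X_3 = a_k X_2 a_k in G_{g,n}. Then X_p X_q = X_q X_p for all p, q in {1,2,3}. -/
/-!
The Gervais presentation of the mapping class group `M_{g,n}` of a compact
oriented surface of genus `g ≥ 1` with `n` boundary components
(S. Gervais, "A finite presentation of the mapping class group of an
oriented surface").

Set `m = 2g + n - 2`.  The group `G g n` below is the group presented with
generators `b`, `b_1, …, b_{g-1}`, `a_1, …, a_m` and `c_{i,j}`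
(`1 ≤ i, j ≤ m`, `i ≠ j`) and the relations

* (A) handles: `c_{2s,2s+1} = c_{2s-1,2s}` for `1 ≤ s ≤ g-1`
  (indices understood cyclically in `{1, …, m}`);
* (T) braids: `xy = yx` whenever the simple closed curves of Gervais's
  configuration labelling the generators `x, y` are disjoint, and
  `xyx = yxy` whenever they intersect transversally in a single point;
* (E_{i,j,k}) stars: `c_{i,j} c_{j,k} c_{k,i} = (a_i a_j a_k b)^3` for each
  good triple `(i,j,k)`, with the convention `c_{l,l} = 1`.

The geometric intersection data of Gervais's configuration is encoded
combinatorially:  the curves `α_1, …, α_m` are pairwise disjoint, `β` meets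
each `α_i` in one point, `β_s` meets exactly `α_{2s-1}` and `α_{2s}` among
the `α`'s, once each, and is disjoint from `β` and from the other `β_t`;
the curve `γ_{i,j}` is disjoint from `β` and from every `α_k`; `β_s` meets
`γ_{i,j}` in one point exactly when `2s ∈ {i,j}`, and two curves `γ_{i,j}`,
`γ_{k,l}` are disjoint exactly when the corresponding cyclic intervals
`[i,j]`, `[k,l]` of `{1, …, m}` do not cross.
-/

namespace Gervais

/-- Generators of the Gervais presentation:  `beta` is `b` (the twist along
`β`), `betaI s` is `b_s` (`1 ≤ s ≤ g-1`), `alpha i` is `a_i`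
(`1 ≤ i ≤ 2g+n-2`) and `gamma i j` is `c_{i,j}` (`i ≠ j`). -/
inductive Gen (g n : ℕ) : Type
  | beta : Gen g n
  | betaI : (s : ℕ) → 1 ≤ s ∧ s ≤ g - 1 → Gen g n
  | alpha : (i : ℕ) → 1 ≤ i ∧ i ≤ 2 * g + n - 2 → Gen g n
  | gamma : (i j : ℕ) →
      (1 ≤ i ∧ i ≤ 2 * g + n - 2) ∧ (1 ≤ j ∧ j ≤ 2 * g + n - 2) ∧ i ≠ j → Gen g n

/-- `x` lies strictly inside the cyclic interval from `a` to `b` in `{1, …, m}`. -/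
def StrictlyInside (m a x b : ℕ) : Prop :=
  0 < (x + m - a) % m ∧ (x + m - a) % m < (b + m - a) % m

/-- The cyclic intervals `[i,j]` and `[k,l]` of `{1, …, m}` cross each other. -/
def Linked (m i j k l : ℕ) : Prop :=
  k ≠ i ∧ k ≠ j ∧ l ≠ i ∧ l ≠ j ∧
    ¬(StrictlyInside m i k j ↔ StrictlyInside m i l j)

/-- The curves labelling the two generators intersect transversally in a
single point. -/
def MeetOnce (g n : ℕ) : Gen g n → Gen g n → Prop
  | .beta, .alpha _ _ => True
  | .alpha _ _, .beta => True
  | .betaI s _, .alpha k _ => k = 2 * s - 1 ∨ k = 2 * s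
  | .alpha k _, .betaI s _ => k = 2 * s - 1 ∨ k = 2 * s
  | .betaI s _, .gamma i j _ => i = 2 * s ∨ j = 2 * s
  | .gamma i j _, .betaI s _ => i = 2 * s ∨ j = 2 * s
  | _, _ => False

/-- The curves labelling the two generators are disjoint. -/
def DisjointCurves (g n : ℕ) : Gen g n → Gen g n → Prop
  | .beta, .beta => False
  | .beta, .alpha _ _ => False
  | .alpha _ _, .beta => False
  | .beta, .betaI _ _ => True
  | .betaI _ _, .beta => True
  | .beta, .gamma _ _ _ => True
  | .gamma _ _ _, .beta => True
  | .alpha i _, .alpha j _ => i ≠ j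
  | .alpha _ _, .gamma _ _ _ => True
  | .gamma _ _ _, .alpha _ _ => True
  | .alpha k _, .betaI s _ => ¬(k = 2 * s - 1 ∨ k = 2 * s)
  | .betaI s _, .alpha k _ => ¬(k = 2 * s - 1 ∨ k = 2 * s)
  | .betaI s _, .betaI t _ => s ≠ t
  | .betaI s _, .gamma i j _ => ¬(i = 2 * s ∨ j = 2 * s)
  | .gamma i j _, .betaI s _ => ¬(i = 2 * s ∨ j = 2 * s)
  | .gamma i j _, .gamma k l _ =>
      ¬Linked (2 * g + n - 2) i j k l ∧ ¬Linked (2 * g + n - 2) k l i j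

/-- The letter `a_i` in the free group (out-of-range indices give `1`). -/
def aF (g n : ℕ) (i : ℕ) : FreeGroup (Gen g n) :=
  if h : 1 ≤ i ∧ i ≤ 2 * g + n - 2 then FreeGroup.of (Gen.alpha i h) else 1

/-- The letter `c_{i,j}` in the free group, with the convention `c_{l,l} = 1`
(out-of-range indices give `1`). -/
def cF (g n : ℕ) (i j : ℕ) : FreeGroup (Gen g n) :=
  if h : (1 ≤ i ∧ i ≤ 2 * g + n - 2) ∧ (1 ≤ j ∧ j ≤ 2 * g + n - 2) ∧ i ≠ j then
    FreeGroup.of (Gen.gamma i j h) else 1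

/-- Reduction of an index into `{1, …, m}`, cyclically. -/
def cyc (m k : ℕ) : ℕ := (k - 1) % m + 1

/-- `(i,j,k)` is a good triple of `{1, …, m}^3`: the three entries are not
all equal and `i ≤ j ≤ k` or `j ≤ k ≤ i` or `k ≤ i ≤ j`. -/
def Good (m i j k : ℕ) : Prop :=
  (1 ≤ i ∧ i ≤ m) ∧ (1 ≤ j ∧ j ≤ m) ∧ (1 ≤ k ∧ k ≤ m) ∧
    ¬(i = j ∧ j = k) ∧ ((i ≤ j ∧ j ≤ k) ∨ (j ≤ k ∧ k ≤ i) ∨ (k ≤ i ∧ i ≤ j))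

/-- The relators of the Gervais presentation: handles `(A)`, braids `(T)` and
stars `(E_{i,j,k})`. -/
inductive IsRel (g n : ℕ) : FreeGroup (Gen g n) → Prop
  | handle (s : ℕ) (h : 1 ≤ s ∧ s ≤ g - 1) :
      IsRel g n (cF g n (2 * s) (cyc (2 * g + n - 2) (2 * s + 1)) *
        (cF g n (2 * s - 1) (2 * s))⁻¹)
  | comm (x y : Gen g n) (h : DisjointCurves g n x y) :
      IsRel g n (FreeGroup.of x * FreeGroup.of y *
        (FreeGroup.of y * FreeGroup.of x)⁻¹)
  | braid (x y : Gen g n) (h : MeetOnce g n x y) :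
      IsRel g n (FreeGroup.of x * FreeGroup.of y * FreeGroup.of x *
        (FreeGroup.of y * FreeGroup.of x * FreeGroup.of y)⁻¹)
  | star (i j k : ℕ) (h : Good (2 * g + n - 2) i j k) :
      IsRel g n (cF g n i j * cF g n j k * cF g n k i *
        ((aF g n i * aF g n j * aF g n k * FreeGroup.of Gen.beta) ^ 3)⁻¹)

/-- The group `G_{g,n}` of the Gervais presentation. -/
abbrev G (g n : ℕ) : Type := PresentedGroup {r : FreeGroup (Gen g n) | IsRel g n r}

/-- The generator `b` of `G_{g,n}`. -/
def b (g n : ℕ) : G g n := PresentedGroup.of Gen.beta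

/-- The generator `b_s` of `G_{g,n}` (out-of-range: `1`). -/
def bI (g n : ℕ) (s : ℕ) : G g n :=
  if h : 1 ≤ s ∧ s ≤ g - 1 then PresentedGroup.of (Gen.betaI s h) else 1

/-- The generator `a_i` of `G_{g,n}` (out-of-range: `1`). -/
def a (g n : ℕ) (i : ℕ) : G g n :=
  if h : 1 ≤ i ∧ i ≤ 2 * g + n - 2 then PresentedGroup.of (Gen.alpha i h) else 1

/-- The generator `c_{i,j}` of `G_{g,n}` (`c_{l,l} = 1`; out-of-range: `1`). -/
def c (g n : ℕ) (i j : ℕ) : G g n :=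
  if h : (1 ≤ i ∧ i ≤ 2 * g + n - 2) ∧ (1 ≤ j ∧ j ≤ 2 * g + n - 2) ∧ i ≠ j then
    PresentedGroup.of (Gen.gamma i j h) else 1

/-!
Put `w = a_i a_j` and `u = b w b`. Since `a_i` and `a_j` commute and both braid with `b`,
conjugation by `u` exchanges `a_i` and `a_j`, so `u` commutes with `w`. The generator `a_k`
commutes with `w`, which gives `[X_1, X_3] = 1`. Finally, braid moves with `a_k b a_k = b a_k b`
reduce `(u a_k)^2 = (a_k u)^2`, i.e. `[X_2, X_3] = 1`, to `(w b)^2 = (b w)^2`, which is `[X_1, X_2] = 1`.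
-/

section BraidRelations

variable {M : Type*} [Monoid M] {t w x y z : M}

theorem mul_sandwich_eq (hx : x * t * x = t * x * t) (hy : y * t * y = t * y * t) :
    x * (t * (x * y) * t) = t * (x * y) * t * y :=
  calc x * (t * (x * y) * t) = x * t * x * y * t := by simp only [mul_assoc]
    _ = t * x * (t * y * t) := by rw [hx]; simp only [mul_assoc]
    _ = t * (x * y) * t * y := by rw [← hy]; simp only [mul_assoc]

theorem commute_mul_sandwich (hxy : Commute x y) (hx : x * t * x = t * x * t)
    (hy : y * t * y = t * y * t) :
    Commute (x * y) (t * (x * y) * t) := by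
  have hyx : y * (t * (x * y) * t) = t * (x * y) * t * x := by
    simpa only [hxy.eq] using mul_sandwich_eq hy hx
  calc x * y * (t * (x * y) * t) = x * (t * (x * y) * t) * x := by
        rw [mul_assoc, hyx, ← mul_assoc]
    _ = t * (x * y) * t * (y * x) := by rw [mul_sandwich_eq hx hy]; simp only [mul_assoc]
    _ = t * (x * y) * t * (x * y) := by rw [hxy.eq]

theorem commute_sandwich_sandwich (hzw : Commute z w) (hz : z * t * z = t * z * t)
    (hw : Commute w (t * w * t)) :
    Commute (t * w * t) (z * (t * w * t) * z) := by
  have hwz : ∀ s, w * (z * s) = z * (w * s) := hzw.symm.left_comm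
  calc t * w * t * (z * (t * w * t) * z) = t * w * (t * z * t) * w * t * z := by
        simp only [mul_assoc]
    _ = t * z * w * t * w * (z * t * z) := by rw [← hz]; simp only [mul_assoc, hwz]
    _ = t * z * (w * (t * w * t)) * z * t := by rw [hz]; simp only [mul_assoc]
    _ = t * z * t * w * t * w * z * t := by rw [hw.eq]; simp only [mul_assoc]
    _ = z * t * w * (z * t * z) * w * t := by rw [← hz]; simp only [mul_assoc, hwz]
    _ = z * (t * w * t) * z * (t * w * t) := by rw [hz]; simp only [mul_assoc]

end BraidRelations

theorem mk_eq_one_of_isRel {g n : ℕ} {r : FreeGroup (Gen g n)} (h : IsRel g n r) :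
    PresentedGroup.mk {r : FreeGroup (Gen g n) | IsRel g n r} r = 1 :=
  (QuotientGroup.eq_one_iff r).mpr (Subgroup.subset_normalClosure h)

theorem commute_of_disjointCurves {g n : ℕ} {x y : Gen g n} (h : DisjointCurves g n x y) :
    Commute (PresentedGroup.of x : G g n) (PresentedGroup.of y) := by
  have hrel := mk_eq_one_of_isRel (IsRel.comm x y h)
  rw [map_mul, map_inv, map_mul, map_mul, mul_inv_eq_one] at hrel
  exact hrel

theorem braid_of_meetOnce {g n : ℕ} {x y : Gen g n} (h : MeetOnce g n x y) :
    (PresentedGroup.of x : G g n) * PresentedGroup.of y * PresentedGroup.of x =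
      PresentedGroup.of y * PresentedGroup.of x * PresentedGroup.of y := by
  have hrel := mk_eq_one_of_isRel (IsRel.braid x y h)
  rw [map_mul, map_inv, map_mul, map_mul, map_mul, map_mul, mul_inv_eq_one] at hrel
  exact hrel

theorem commute_a (g n i j : ℕ) : Commute (a g n i) (a g n j) := by
  by_cases hij : i = j
  · rw [hij]
  unfold a
  split_ifs
  · exact commute_of_disjointCurves hij
  all_goals simp

theorem a_mul_b_mul_a {g n i : ℕ} (hi : 1 ≤ i ∧ i ≤ 2 * g + n - 2) :
    a g n i * b g n * a g n i = b g n * a g n i * b g n := by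
  rw [a, dif_pos hi]
  exact braid_of_meetOnce trivial

theorem X_commute_general (g n : ℕ) (i j k : ℕ)
    (hi : 1 ≤ i ∧ i ≤ 2 * g + n - 2) (hj : 1 ≤ j ∧ j ≤ 2 * g + n - 2)
    (hk : 1 ≤ k ∧ k ≤ 2 * g + n - 2)
    (X : ℕ → G g n)
    (hX1 : X 1 = a g n i * a g n j)
    (hX2 : X 2 = b g n * X 1 * b g n)
    (hX3 : X 3 = a g n k * X 2 * a g n k) :
    ∀ p ∈ ({1, 2, 3} : Set ℕ), ∀ q ∈ ({1, 2, 3} : Set ℕ),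
      X p * X q = X q * X p := by
  have h12 : Commute (X 1) (X 2) := by
    rw [hX2, hX1]
    exact commute_mul_sandwich (commute_a g n i j) (a_mul_b_mul_a hi) (a_mul_b_mul_a hj)
  have hk1 : Commute (a g n k) (X 1) := by
    rw [hX1]
    exact (commute_a g n k i).mul_right (commute_a g n k j)
  have h13 : Commute (X 1) (X 3) := by
    rw [hX3]
    exact (hk1.symm.mul_right h12).mul_right hk1.symm
  have h23 : Commute (X 2) (X 3) := by
    rw [hX3, hX2]
    exact commute_sandwich_sandwich hk1 (a_mul_b_mul_a hk) (hX2 ▸ h12)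
  intro p hp q hq
  show Commute (X p) (X q)
  simp only [Set.mem_insert_iff, Set.mem_singleton_iff] at hp hq
  rcases hp with rfl | rfl | rfl <;> rcases hq with rfl | rfl | rfl <;>
    simp only [Commute.refl, h12, h13, h23, h12.symm, h13.symm, h23.symm]

/-- For all `i, j, k ∈ {1, …, m}`, set `X_1 = a_i a_j`, `X_2 = b X_1 b` and
`X_3 = a_k X_2 a_k` in `G_{g,n}`.  Then `X_p X_q = X_q X_p` for all
`p, q ∈ {1, 2, 3}`. -/
theorem X_commute (g n : ℕ) (hg : 1 ≤ g) (i j k : ℕ)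
    (hi : 1 ≤ i ∧ i ≤ 2 * g + n - 2) (hj : 1 ≤ j ∧ j ≤ 2 * g + n - 2)
    (hk : 1 ≤ k ∧ k ≤ 2 * g + n - 2)
    (X : ℕ → G g n)
    (hX1 : X 1 = a g n i * a g n j)
    (hX2 : X 2 = b g n * X 1 * b g n)
    (hX3 : X 3 = a g n k * X 2 * a g n k) :
    ∀ p ∈ ({1, 2, 3} : Set ℕ), ∀ q ∈ ({1, 2, 3} : Set ℕ),
      X p * X q = X q * X p :=
  X_commute_general g n i j k hi hj hk X hX1 hX2 hX3

end Gervais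
end

section
/- For all i, j in {1,...,m}, the following identities hold in G_{g,n}: (a_i a_i a_j b)^3 = (a_i a_j)^2 (b a_i a_j b)^2 = (a_i a_j b)^4 = (a_i b a_j)^4. -/
/-!
With `x = a_i`, `t = b`, `y = a_j`, the elements `x, t, y` satisfy the braid relations of the
standard generators `σ₁, σ₂, σ₃` of the braid group `B₄` (for `i = j` trivially so, with
`x = y`). Put `P = x t y`, the analogue of `σ₁σ₂σ₃`. Conjugation by `P` sends `x ↦ t ↦ y`, and
conjugation by `P² = (x t x)(y t y)` swaps `x` and `y`; hence `P⁴`, the analogue of the full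
twist `Δ²`, commutes with `y`. The words `x y t` and `x x y t` are the conjugates by `y`
of `P` and `x P`, and `(x P)³ = P⁴`; so `(x x y t)³ = (x y t)⁴ = P⁴`. Finally `x y` commutes with
`(x y t)²`, a conjugate of `P²`, which turns `(x y)² (t x y t)²` into `(x y t)⁴`.
-/

structure BraidsA3 {M : Type*} [Group M] (x t y : M) : Prop where
  commute : Commute x y
  braid_left : x * t * x = t * x * t
  braid_right : y * t * y = t * y * t

theorem Commute.of_semiconjBy {M : Type*} [Group M] {a b c d : M} (h : SemiconjBy a b c)
    (ha : Commute d a) (hb : Commute d b) : Commute d c := by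
  rw [eq_mul_inv_of_mul_eq h.eq.symm]
  exact (ha.mul_right hb).mul_right ha.inv_right

theorem SemiconjBy.eq_of_commute {M : Type*} [Group M] {a b c : M} (h : SemiconjBy a b c)
    (hab : Commute a b) : c = b :=
  mul_right_cancel (h.eq.symm.trans hab.eq)

namespace BraidsA3

variable {M : Type*} [Group M] {x t y : M}

theorem semiconjBy_left (h : BraidsA3 x t y) : SemiconjBy (x * t * y) x t :=
  calc x * t * y * x = x * t * (y * x) := by group
    _ = x * t * x * y := by rw [← h.commute.eq]; group
    _ = t * (x * t * y) := by rw [h.braid_left]; group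

theorem semiconjBy_mid (h : BraidsA3 x t y) : SemiconjBy (x * t * y) t y :=
  calc x * t * y * t = x * (t * y * t) := by group
    _ = x * y * t * y := by rw [← h.braid_right]; group
    _ = y * (x * t * y) := by rw [h.commute.eq]; group

theorem sq_semiconjBy_left (h : BraidsA3 x t y) : SemiconjBy ((x * t * y) ^ 2) x y := by
  rw [pow_two]
  exact h.semiconjBy_mid.mul_left h.semiconjBy_left

theorem sq_semiconjBy_right (h : BraidsA3 x t y) : SemiconjBy ((x * t * y) ^ 2) y x := by
  have hx : SemiconjBy (x * t * x) t x :=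
    calc x * t * x * t = x * (t * x * t) := by group
      _ = x * (x * t * x) := by rw [← h.braid_left]
  have hy : SemiconjBy (y * t * y) y t :=
    calc y * t * y * y = t * y * t * y := by rw [h.braid_right]
      _ = t * (y * t * y) := by group
  have hsq : (x * t * y) ^ 2 = x * t * x * (y * t * y) :=
    calc (x * t * y) ^ 2 = x * t * (y * x) * (t * y) := by
          simp only [pow_succ, pow_zero, one_mul, mul_assoc]
      _ = x * t * x * (y * t * y) := by rw [← h.commute.eq]; group
  rw [hsq]
  exact hx.mul_left hy

theorem commute_pow_four_right (h : BraidsA3 x t y) : Commute ((x * t * y) ^ 4) y := by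
  rw [show 4 = 2 + 2 from rfl, pow_add]
  exact h.sq_semiconjBy_left.mul_left h.sq_semiconjBy_right

theorem commute_mul_sq (h : BraidsA3 x t y) : Commute (x * y) ((x * t * y) ^ 2) := by
  have hs := h.sq_semiconjBy_left.mul_right h.sq_semiconjBy_right
  rw [← h.commute.eq] at hs
  exact (hs : Commute _ _).symm

theorem mul_pow_three (h : BraidsA3 x t y) : (x * (x * t * y)) ^ 3 = (x * t * y) ^ 4 := by
  have hx := h.semiconjBy_left.eq
  have ht := h.semiconjBy_mid.eq
  generalize hP : x * t * y = P at hx ht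
  calc (x * P) ^ 3 = x * (P * x) * (P * x) * P := by
        simp only [pow_succ, pow_zero, one_mul, mul_assoc]
    _ = x * t * (P * t) * P * P := by rw [hx]; group
    _ = x * t * y * P * P * P := by rw [ht]; group
    _ = P ^ 4 := by rw [hP]; simp only [pow_succ, pow_zero, one_mul]

theorem semiconjBy_right (h : BraidsA3 x t y) : SemiconjBy y (x * t * y) (x * y * t) :=
  calc y * (x * t * y) = y * x * t * y := by group
    _ = x * y * t * y := by rw [← h.commute.eq]

theorem mul_right_comm_pow_four (h : BraidsA3 x t y) : (x * y * t) ^ 4 = (x * t * y) ^ 4 :=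
  (h.semiconjBy_right.pow_right 4).eq_of_commute h.commute_pow_four_right.symm

theorem pow_three_eq_pow_four (h : BraidsA3 x t y) : (x * x * y * t) ^ 3 = (x * t * y) ^ 4 := by
  have hs := (SemiconjBy.mul_right h.commute.symm h.semiconjBy_right).pow_right 3
  rw [h.mul_pow_three, ← mul_assoc, ← mul_assoc] at hs
  exact hs.eq_of_commute h.commute_pow_four_right.symm

theorem sq_mul_sq_eq_pow_four (h : BraidsA3 x t y) :
    (x * y) ^ 2 * (t * x * y * t) ^ 2 = (x * y * t) ^ 4 := by
  have hu : Commute (x * y) ((x * y * t) ^ 2) :=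
    Commute.of_semiconjBy (h.semiconjBy_right.pow_right 2)
      (h.commute.mul_left (Commute.refl y)) h.commute_mul_sq
  calc
    _ = x * y * (x * y * t) ^ 2 * t * (x * y * t) := by
      simp only [pow_succ, pow_zero, one_mul, mul_assoc]
    _ = (x * y * t) ^ 4 := by rw [hu.eq]; simp only [pow_succ, pow_zero, one_mul, mul_assoc]

end BraidsA3

namespace Gervais

theorem braidsA3_a_b_a {g n i j : ℕ} (hi : 1 ≤ i ∧ i ≤ 2 * g + n - 2)
    (hj : 1 ≤ j ∧ j ≤ 2 * g + n - 2) : BraidsA3 (a g n i) (b g n) (a g n j) := by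
  have hai : a g n i = PresentedGroup.of (Gen.alpha i hi) := dif_pos hi
  have haj : a g n j = PresentedGroup.of (Gen.alpha j hj) := dif_pos hj
  refine ⟨?_, ?_, ?_⟩
  · obtain rfl | hij := eq_or_ne i j
    · exact Commute.refl _
    · rw [hai, haj]; exact commute_of_disjointCurves hij
  · rw [hai]; exact braid_of_meetOnce (y := Gen.beta) trivial
  · rw [haj]; exact braid_of_meetOnce (y := Gen.beta) trivial

theorem degenerate_star_general (g n : ℕ) (i j : ℕ)
    (hi : 1 ≤ i ∧ i ≤ 2 * g + n - 2) (hj : 1 ≤ j ∧ j ≤ 2 * g + n - 2) :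
    (a g n i * a g n i * a g n j * b g n) ^ 3 =
        (a g n i * a g n j) ^ 2 * (b g n * a g n i * a g n j * b g n) ^ 2 ∧
      (a g n i * a g n j) ^ 2 * (b g n * a g n i * a g n j * b g n) ^ 2 =
        (a g n i * a g n j * b g n) ^ 4 ∧
      (a g n i * a g n j * b g n) ^ 4 = (a g n i * b g n * a g n j) ^ 4 := by
  have h := braidsA3_a_b_a hi hj
  refine ⟨?_, h.sq_mul_sq_eq_pow_four, h.mul_right_comm_pow_four⟩
  rw [h.sq_mul_sq_eq_pow_four, h.mul_right_comm_pow_four]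
  exact h.pow_three_eq_pow_four

/-- For all `i, j ∈ {1, …, m}`, the identities
`(a_i a_i a_j b)^3 = (a_i a_j)^2 (b a_i a_j b)^2 = (a_i a_j b)^4 = (a_i b a_j)^4`
hold in `G_{g,n}`. -/
theorem degenerate_star (g n : ℕ) (hg : 1 ≤ g) (i j : ℕ)
    (hi : 1 ≤ i ∧ i ≤ 2 * g + n - 2) (hj : 1 ≤ j ∧ j ≤ 2 * g + n - 2) :
    (a g n i * a g n i * a g n j * b g n) ^ 3 =
        (a g n i * a g n j) ^ 2 * (b g n * a g n i * a g n j * b g n) ^ 2 ∧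
      (a g n i * a g n j) ^ 2 * (b g n * a g n i * a g n j * b g n) ^ 2 =
        (a g n i * a g n j * b g n) ^ 4 ∧
      (a g n i * a g n j * b g n) ^ 4 = (a g n i * b g n * a g n j) ^ 4 :=
  degenerate_star_general g n i j hi hj

end Gervais
end

section
/- For all g >= 1 and n >= 1, the kernel of g_2 : G_{g,n} -> G_{g,n-1} is normally generated in G_{g,n} by the two elements d_n = c_{m,1} and x_0 = a_1 a_m^{-1}. -/
/-!
The Gervais presentation of the mapping class group `M_{g,n}` of a compact
oriented surface of genus `g ≥ 1` with `n` boundary components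
(S. Gervais, "A finite presentation of the mapping class group of an
oriented surface").

Set `m = 2g + n - 2`.  The group `G g n` below is the group presented with
generators `b`, `b_1, …, b_{g-1}`, `a_1, …, a_m` and `c_{i,j}`
(`1 ≤ i, j ≤ m`, `i ≠ j`) and the relations

* (A) handles: `c_{2s,2s+1} = c_{2s-1,2s}` for `1 ≤ s ≤ g-1`
  (indices understood cyclically in `{1, …, m}`);
* (T) braids: `xy = yx` whenever the simple closed curves of Gervais's
  configuration labelling the generators `x, y` are disjoint, and
  `xyx = yxy` whenever they intersect transversally in a single point;
* (E_{i,j,k}) stars: `c_{i,j} c_{j,k} c_{k,i} = (a_i a_j a_k b)^3` for each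
  good triple `(i,j,k)`, with the convention `c_{l,l} = 1`.

The geometric intersection data of Gervais's configuration is encoded
combinatorially:  the curves `α_1, …, α_m` are pairwise disjoint, `β` meets
each `α_i` in one point, `β_s` meets exactly `α_{2s-1}` and `α_{2s}` among
the `α`'s, once each, and is disjoint from `β` and from the other `β_t`;
the curve `γ_{i,j}` is disjoint from `β` and from every `α_k`; `β_s` meets
`γ_{i,j}` in one point exactly when `2s ∈ {i,j}`, and two curves `γ_{i,j}`,
`γ_{k,l}` are disjoint exactly when the corresponding cyclic intervals
`[i,j]`, `[k,l]` of `{1, …, m}` do not cross.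
-/

namespace Gervais

/-- `φ : G_{g,n} → G_{g,n-1}` takes the values prescribed for the
homomorphism `g_2`  (writing `a'_i, b', b'_s, c'_{i,j}` for the generators of
`G_{g,n-1}` and `m = 2g+n-2`):  `g_2 a_i = a'_i` for `i ≠ m`, `g_2 a_m = a'_1`,
`g_2 b = b'`, `g_2 b_s = b'_s` for `1 ≤ s ≤ g-1`, `g_2 c_{i,j} = c'_{i,j}` for
`1 ≤ i, j ≤ m-1`, `g_2 c_{i,m} = c'_{i,1}` and `g_2 c_{m,j} = c'_{1,j}` for
`2 ≤ i, j ≤ m-1`, `g_2 c_{1,m} = (a'_1 b' a'_1)^4` and `g_2 c_{m,1} = 1`. -/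
def G2Spec (g n : ℕ) (φ : G g n →* G g (n - 1)) : Prop :=
  (∀ i, 1 ≤ i → i ≤ 2 * g + n - 3 → φ (a g n i) = a g (n - 1) i) ∧
  φ (a g n (2 * g + n - 2)) = a g (n - 1) 1 ∧
  φ (b g n) = b g (n - 1) ∧
  (∀ s, 1 ≤ s → s ≤ g - 1 → φ (bI g n s) = bI g (n - 1) s) ∧
  (∀ i j, 1 ≤ i → i ≤ 2 * g + n - 3 → 1 ≤ j → j ≤ 2 * g + n - 3 →
    φ (c g n i j) = c g (n - 1) i j) ∧
  (∀ i, 2 ≤ i → i ≤ 2 * g + n - 3 → φ (c g n i (2 * g + n - 2)) = c g (n - 1) i 1) ∧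
  (∀ j, 2 ≤ j → j ≤ 2 * g + n - 3 → φ (c g n (2 * g + n - 2) j) = c g (n - 1) 1 j) ∧
  φ (c g n 1 (2 * g + n - 2)) = (a g (n - 1) 1 * b g (n - 1) * a g (n - 1) 1) ^ 4 ∧
  φ (c g n (2 * g + n - 2) 1) = 1

/-!
Let `N` be the normal closure of `d_n = c_{m,1}` and `x_0 = a_1 a_m⁻¹`. Modulo `N` the letter
`a_m` becomes `a_1`, so comparing the star relations `E_{i,m,1}`, `E_{j,m,m}`, `E_{1,1,m}` with
`E_{i,1,1}`, `E_{j,1,1}` and with the braid relation of `a_1` and `b` gives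
`c_{i,m} ≡ c_{i,1}`, `c_{m,j} ≡ c_{1,j}` and `c_{1,m} ≡ (a_1 b a_1)^4`. By the first congruence,
sending each generator of `G_{g,n-1}` to the class of its namesake in `G_{g,n}` respects the
relations of `G_{g,n-1}` (only its last handle relation, which wraps around to the index `1`, is
not already a relation of `G_{g,n}`); by all three, the resulting homomorphism
`G_{g,n-1} → G_{g,n}/N` composed with `g_2` is the quotient map. Hence `ker g_2 ≤ N`, and `g_2`
kills `d_n` and `x_0`.

For `g = n = 1` there is no such `g_2`: it would send `c_{1,1} = 1` to `b'^4`, which has infinite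
order in `G_{1,0}`.
-/

theorem pow_three_eq_pow_four_of_braid {H : Type*} [Group H] {x y : H}
    (h : x * y * x = y * x * y) : (x * x * x * y) ^ 3 = (x * y * x) ^ 4 := by
  obtain ⟨Δ, hΔ⟩ : ∃ Δ, x * y * x = Δ := ⟨_, rfl⟩
  have hΔx : Δ * x = y * Δ := by rw [← hΔ]; nth_rw 1 [h]; group
  have hΔy : Δ * y = x * Δ := by rw [← hΔ]; nth_rw 2 [h]; group
  have hcentral : Commute (Δ * Δ) x := by
    rw [Commute, SemiconjBy, mul_assoc, hΔx, ← mul_assoc, hΔy, mul_assoc]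
  rw [hΔ]
  calc (x * x * x * y) ^ 3 = x * (x * (Δ * x) * Δ * x * Δ) * x⁻¹ := by
        rw [← hΔ]; simp only [pow_succ, pow_zero, one_mul]; group
    _ = x * (x * y * (Δ * Δ * (x * Δ))) * x⁻¹ := by rw [hΔx]; simp only [mul_assoc]
    _ = x * (x * y * x * (Δ * Δ * Δ)) * x⁻¹ := by
        rw [hcentral.left_comm]; simp only [mul_assoc]
    _ = x * (Δ * Δ * (Δ * Δ)) * x⁻¹ := by rw [hΔ]; simp only [mul_assoc]
    _ = Δ ^ 4 := by
        rw [← (hcentral.mul_left hcentral).eq, mul_inv_cancel_right]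
        simp only [pow_succ, pow_zero, one_mul, mul_assoc]

theorem ker_le_of_comp_eq_mk' {H K : Type*} [Group H] [Group K] {N : Subgroup H} [N.Normal]
    (φ : H →* K) (ψ : K →* H ⧸ N) (h : ψ.comp φ = QuotientGroup.mk' N) : φ.ker ≤ N := by
  rw [← QuotientGroup.ker_mk' N, ← h, ← MonoidHom.comap_ker]
  exact φ.ker_le_comap _

theorem add_sub_mod_eq_ite {m a x : ℕ} (ha : 1 ≤ a) (hx : 1 ≤ x) (hxm : x ≤ m) :
    (x + m - a) % m = if a ≤ x then x - a else x + m - a := by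
  split_ifs with h
  · rw [show x + m - a = x - a + m by omega, Nat.add_mod_right, Nat.mod_eq_of_lt (by omega)]
  · exact Nat.mod_eq_of_lt (by omega)

theorem strictlyInside_succ_iff {m a x b : ℕ} (ha : 1 ≤ a) (ha' : a ≤ m) (hx : 1 ≤ x)
    (hx' : x ≤ m) (hb : 1 ≤ b) (hb' : b ≤ m) :
    StrictlyInside (m + 1) a x b ↔ StrictlyInside m a x b := by
  unfold StrictlyInside
  rw [add_sub_mod_eq_ite ha hx hx', add_sub_mod_eq_ite ha hb hb',
    add_sub_mod_eq_ite ha hx (by omega), add_sub_mod_eq_ite ha hb (by omega)]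
  split_ifs <;> omega

theorem linked_succ_iff {m i j k l : ℕ} (hi : 1 ≤ i) (hi' : i ≤ m) (hj : 1 ≤ j) (hj' : j ≤ m)
    (hk : 1 ≤ k) (hk' : k ≤ m) (hl : 1 ≤ l) (hl' : l ≤ m) :
    Linked (m + 1) i j k l ↔ Linked m i j k l := by
  rw [Linked, Linked, strictlyInside_succ_iff hi hi' hk hk' hj hj',
    strictlyInside_succ_iff hi hi' hl hl' hj hj']

theorem Good.mono {m m' i j k : ℕ} (h : Good m i j k) (hm : m ≤ m') : Good m' i j k := by
  unfold Good at h ⊢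
  omega

theorem cyc_of_le {m k : ℕ} (hk : 1 ≤ k) (hkm : k ≤ m) : cyc m k = k := by
  rw [cyc, Nat.mod_eq_of_lt (by omega)]
  omega

theorem cyc_succ_self (m : ℕ) : cyc m (m + 1) = 1 := by
  simp [cyc]

theorem cyc_le {m k : ℕ} (hm : 0 < m) : cyc m k ≤ m := by
  have := Nat.mod_lt (k - 1) hm
  rw [cyc]
  omega

section Relations

variable {g n : ℕ}

theorem c_self (i : ℕ) : c g n i i = 1 := by
  simp [c]

theorem of_alpha {i : ℕ} (h : 1 ≤ i ∧ i ≤ 2 * g + n - 2) :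
    PresentedGroup.of (Gen.alpha i h) = a g n i := by
  rw [a, dif_pos h]

theorem of_betaI {s : ℕ} (h : 1 ≤ s ∧ s ≤ g - 1) :
    PresentedGroup.of (Gen.betaI s h) = bI g n s := by
  rw [bI, dif_pos h]

theorem of_gamma {i j : ℕ}
    (h : (1 ≤ i ∧ i ≤ 2 * g + n - 2) ∧ (1 ≤ j ∧ j ≤ 2 * g + n - 2) ∧ i ≠ j) :
    PresentedGroup.of (Gen.gamma i j h) = c g n i j := by
  rw [c, dif_pos h]

theorem mk_beta : (PresentedGroup.mk _ (FreeGroup.of Gen.beta) : G g n) = b g n :=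
  rfl

theorem mk_aF (i : ℕ) : (PresentedGroup.mk _ (aF g n i) : G g n) = a g n i := by
  unfold aF a
  split_ifs
  exacts [rfl, map_one _]

theorem mk_cF (i j : ℕ) : (PresentedGroup.mk _ (cF g n i j) : G g n) = c g n i j := by
  unfold cF c
  split_ifs
  exacts [rfl, map_one _]

theorem handle_rel {s : ℕ} (h : 1 ≤ s ∧ s ≤ g - 1) :
    c g n (2 * s) (cyc (2 * g + n - 2) (2 * s + 1)) = c g n (2 * s - 1) (2 * s) := by
  simpa only [mk_cF] using
    PresentedGroup.mk_eq_mk_of_mul_inv_mem (rels := {r | IsRel g n r}) (IsRel.handle s h)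

theorem braid_rel {x y : Gen g n} (h : MeetOnce g n x y) :
    (PresentedGroup.of x * PresentedGroup.of y * PresentedGroup.of x : G g n) =
      PresentedGroup.of y * PresentedGroup.of x * PresentedGroup.of y :=
  PresentedGroup.mk_eq_mk_of_mul_inv_mem (IsRel.braid x y h)

theorem star_rel {i j k : ℕ} (h : Good (2 * g + n - 2) i j k) :
    c g n i j * c g n j k * c g n k i = (a g n i * a g n j * a g n k * b g n) ^ 3 := by
  simpa only [map_mul, map_pow, mk_aF, mk_cF, mk_beta] using
    PresentedGroup.mk_eq_mk_of_mul_inv_mem (rels := {r | IsRel g n r}) (IsRel.star i j k h)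

theorem a_one_b_braid (hm : 1 ≤ 2 * g + n - 2) :
    a g n 1 * b g n * a g n 1 = b g n * a g n 1 * b g n := by
  have h := braid_rel (x := Gen.alpha 1 ⟨le_rfl, hm⟩) (y := .beta) trivial
  rwa [of_alpha] at h

end Relations

section QuotientIdentities

variable {g n : ℕ} {Q : Type*} [Group Q] (π : G g n →* Q)

theorem map_c_last_right (hc : π (c g n (2 * g + n - 2) 1) = 1)
    (ha : π (a g n 1) = π (a g n (2 * g + n - 2))) {i : ℕ} (hi : 2 ≤ i)
    (him : i ≤ 2 * g + n - 2) :
    π (c g n i (2 * g + n - 2)) = π (c g n i 1) := by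
  have h₁ := congrArg π
    (star_rel (i := i) (j := 2 * g + n - 2) (k := 1) (by unfold Good; omega))
  have h₂ := congrArg π (star_rel (i := i) (j := 1) (k := 1) (by unfold Good; omega))
  simp only [map_mul, map_pow, c_self, mul_one, hc, ← ha] at h₁ h₂
  exact mul_right_cancel (h₁.trans h₂.symm)

theorem map_c_last_left (hc : π (c g n (2 * g + n - 2) 1) = 1)
    (ha : π (a g n 1) = π (a g n (2 * g + n - 2))) {j : ℕ} (hj : 2 ≤ j)
    (hjm : j < 2 * g + n - 2) :
    π (c g n (2 * g + n - 2) j) = π (c g n 1 j) := by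
  have h₁ := congrArg π
    (star_rel (i := j) (j := 2 * g + n - 2) (k := 2 * g + n - 2) (by unfold Good; omega))
  have h₂ := congrArg π (star_rel (i := j) (j := 1) (k := 1) (by unfold Good; omega))
  simp only [map_mul, map_pow, c_self, mul_one, ← ha,
    map_c_last_right π hc ha hj hjm.le] at h₁ h₂
  exact mul_left_cancel (h₁.trans h₂.symm)

theorem map_c_one_last (hc : π (c g n (2 * g + n - 2) 1) = 1)
    (ha : π (a g n 1) = π (a g n (2 * g + n - 2))) (hm : 2 ≤ 2 * g + n - 2) :
    π (c g n 1 (2 * g + n - 2)) = (π (a g n 1) * π (b g n) * π (a g n 1)) ^ 4 := by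
  have h := congrArg π
    (star_rel (i := 1) (j := 1) (k := 2 * g + n - 2) (by unfold Good; omega))
  have hbraid := congrArg π (a_one_b_braid (g := g) (n := n) (by omega))
  simp only [map_mul, map_pow, c_self, one_mul, mul_one, hc, ← ha] at h hbraid
  rw [h, pow_three_eq_pow_four_of_braid hbraid]

end QuotientIdentities

section Inclusion

variable {g n : ℕ}

def Gen.incl (hn : 1 ≤ n) : Gen g (n - 1) → Gen g n
  | .beta => .beta
  | .betaI s h => .betaI s h
  | .alpha i h => .alpha i ⟨h.1, by omega⟩
  | .gamma i j h => .gamma i j ⟨⟨h.1.1, by omega⟩, ⟨h.2.1.1, by omega⟩, h.2.2⟩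

theorem meetOnce_incl (hn : 1 ≤ n) {x y : Gen g (n - 1)} (h : MeetOnce g (n - 1) x y) :
    MeetOnce g n (x.incl hn) (y.incl hn) := by
  cases x <;> cases y <;> exact h

theorem disjointCurves_incl (hn : 1 ≤ n) {x y : Gen g (n - 1)}
    (h : DisjointCurves g (n - 1) x y) : DisjointCurves g n (x.incl hn) (y.incl hn) := by
  cases x <;> cases y <;> try exact h
  case gamma.gamma i j hij k l hkl =>
    have ⟨⟨hi, hi'⟩, ⟨hj, hj'⟩, _⟩ := hij
    have ⟨⟨hk, hk'⟩, ⟨hl, hl'⟩, _⟩ := hkl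
    have hm : 2 * g + n - 2 = 2 * g + (n - 1) - 2 + 1 := by omega
    change ¬Linked (2 * g + n - 2) i j k l ∧ ¬Linked (2 * g + n - 2) k l i j
    rwa [hm, linked_succ_iff hi hi' hj hj' hk hk' hl hl',
      linked_succ_iff hk hk' hl hl' hi hi' hj hj']

theorem map_incl_aF (hn : 1 ≤ n) {i : ℕ} (hi : i ≤ 2 * g + (n - 1) - 2) :
    FreeGroup.map (Gen.incl hn) (aF g (n - 1) i) = aF g n i := by
  unfold aF
  split_ifs <;> first | omega | simp [Gen.incl]

theorem map_incl_cF (hn : 1 ≤ n) {i j : ℕ} (hi : i ≤ 2 * g + (n - 1) - 2)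
    (hj : j ≤ 2 * g + (n - 1) - 2) :
    FreeGroup.map (Gen.incl hn) (cF g (n - 1) i j) = cF g n i j := by
  unfold cF
  split_ifs <;> first | omega | simp [Gen.incl]

end Inclusion

section Descent

variable {g n : ℕ} {Q : Type*} [Group Q] (hn : 1 ≤ n) (π : G g n →* Q)

theorem map_mk_map_incl_of_isRel (hc : π (c g n (2 * g + n - 2) 1) = 1)
    (ha : π (a g n 1) = π (a g n (2 * g + n - 2))) {r : FreeGroup (Gen g (n - 1))}
    (hr : IsRel g (n - 1) r) :
    π (PresentedGroup.mk _ (FreeGroup.map (Gen.incl hn) r) : G g n) = 1 := by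
  have of_isRel {r : FreeGroup (Gen g (n - 1))}
      (h : IsRel g n (FreeGroup.map (Gen.incl hn) r)) :
      π (PresentedGroup.mk _ (FreeGroup.map (Gen.incl hn) r) : G g n) = 1 := by
    rw [PresentedGroup.one_of_mem (rels := {r | IsRel g n r}) h, map_one]
  cases hr with
  | comm x y h =>
    refine of_isRel ?_
    simpa only [map_mul, map_inv, FreeGroup.map.of] using
      IsRel.comm _ _ (disjointCurves_incl hn h)
  | braid x y h =>
    refine of_isRel ?_
    simpa only [map_mul, map_inv, FreeGroup.map.of] using IsRel.braid _ _ (meetOnce_incl hn h)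
  | star i j k h =>
    have ⟨⟨_, hi⟩, ⟨_, hj⟩, ⟨_, hk⟩, _⟩ := h
    refine of_isRel ?_
    simpa only [map_mul, map_inv, map_pow, FreeGroup.map.of, Gen.incl, map_incl_aF hn,
      map_incl_cF hn, hi, hj, hk] using IsRel.star i j k (h.mono (by omega))
  | handle s hs =>
    have hm : 2 * s ≤ 2 * g + (n - 1) - 2 := by omega
    rw [map_mul, map_inv, map_incl_cF hn (by omega) (cyc_le (by omega)),
      map_incl_cF hn (by omega) hm, map_mul, map_inv, mk_cF, mk_cF, map_mul, map_inv,
      mul_inv_eq_one]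
    have hcyc : cyc (2 * g + n - 2) (2 * s + 1) = 2 * s + 1 := cyc_of_le (by omega) (by omega)
    rcases hm.lt_or_eq with hlt | heq
    · rw [cyc_of_le (k := 2 * s + 1) (by omega) hlt, ← hcyc, handle_rel hs]
    · -- the last handle relation: `2s + 1` is `m` in `G_{g,n}`, but `1` in `G_{g,n-1}`
      have hfirst : cyc (2 * g + (n - 1) - 2) (2 * s + 1) = 1 := by rw [heq, cyc_succ_self]
      have hlast : 2 * s + 1 = 2 * g + n - 2 := by omega
      rw [hfirst, ← map_c_last_right π hc ha (by omega) (by omega), ← hlast, ← hcyc,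
        handle_rel hs]

def g2Lift (hc : π (c g n (2 * g + n - 2) 1) = 1)
    (ha : π (a g n 1) = π (a g n (2 * g + n - 2))) : G g (n - 1) →* Q :=
  QuotientGroup.lift _ ((π.comp (PresentedGroup.mk _)).comp (FreeGroup.map (Gen.incl hn)))
    (Subgroup.normalClosure_le_normal fun _ hr => map_mk_map_incl_of_isRel hn π hc ha hr)

variable (hc : π (c g n (2 * g + n - 2) 1) = 1) (ha : π (a g n 1) = π (a g n (2 * g + n - 2)))

theorem g2Lift_mk (r : FreeGroup (Gen g (n - 1))) :
    g2Lift hn π hc ha (PresentedGroup.mk _ r) =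
      π (PresentedGroup.mk _ (FreeGroup.map (Gen.incl hn) r)) :=
  rfl

theorem g2Lift_b : g2Lift hn π hc ha (b g (n - 1)) = π (b g n) :=
  rfl

theorem g2Lift_bI {s : ℕ} (hs : 1 ≤ s ∧ s ≤ g - 1) :
    g2Lift hn π hc ha (bI g (n - 1) s) = π (bI g n s) := by
  rw [← of_betaI hs, ← of_betaI hs]
  rfl

theorem g2Lift_a {i : ℕ} (hi : i ≤ 2 * g + (n - 1) - 2) :
    g2Lift hn π hc ha (a g (n - 1) i) = π (a g n i) := by
  rw [← mk_aF, g2Lift_mk, map_incl_aF hn hi, mk_aF]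

theorem g2Lift_c {i j : ℕ} (hi : i ≤ 2 * g + (n - 1) - 2) (hj : j ≤ 2 * g + (n - 1) - 2) :
    g2Lift hn π hc ha (c g (n - 1) i j) = π (c g n i j) := by
  rw [← mk_cF, g2Lift_mk, map_incl_cF hn hi hj, mk_cF]

variable {φ : G g n →* G g (n - 1)}

theorem g2Lift_map_a (hφ : G2Spec g n φ) (hm : 2 ≤ 2 * g + n - 2) {i : ℕ} (hi : 1 ≤ i)
    (him : i ≤ 2 * g + n - 2) :
    g2Lift hn π hc ha (φ (a g n i)) = π (a g n i) := by
  obtain ⟨hφa, hφam, -⟩ := hφ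
  rcases him.lt_or_eq with him | rfl
  · rw [hφa i hi (by omega), g2Lift_a hn π hc ha (by omega)]
  · rw [hφam, g2Lift_a hn π hc ha (by omega), ha]

theorem g2Lift_map_c (hφ : G2Spec g n φ) (hm : 2 ≤ 2 * g + n - 2) {i j : ℕ} (hi : 1 ≤ i)
    (him : i ≤ 2 * g + n - 2) (hj : 1 ≤ j) (hjm : j ≤ 2 * g + n - 2) (hij : i ≠ j) :
    g2Lift hn π hc ha (φ (c g n i j)) = π (c g n i j) := by
  obtain ⟨-, -, -, -, hφc, hφc_right, hφc_left, hφc_one_last, hφc_last_one⟩ := hφ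
  obtain ⟨hi', hj'⟩ | ⟨rfl, rfl⟩ | ⟨rfl, hj2, hj'⟩ | ⟨rfl, rfl⟩ | ⟨hi2, hi', rfl⟩ :
      (i ≤ 2 * g + n - 3 ∧ j ≤ 2 * g + n - 3) ∨ (i = 2 * g + n - 2 ∧ j = 1) ∨
      (i = 2 * g + n - 2 ∧ 2 ≤ j ∧ j ≤ 2 * g + n - 3) ∨ (i = 1 ∧ j = 2 * g + n - 2) ∨
      (2 ≤ i ∧ i ≤ 2 * g + n - 3 ∧ j = 2 * g + n - 2) := by omega
  · rw [hφc i j hi hi' hj hj', g2Lift_c hn π hc ha (by omega) (by omega)]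
  · rw [hφc_last_one, map_one, hc]
  · rw [hφc_left j hj2 hj', g2Lift_c hn π hc ha (by omega) (by omega),
      map_c_last_left π hc ha hj2 (by omega)]
  · rw [hφc_one_last, map_pow, map_mul, map_mul, g2Lift_a hn π hc ha (by omega), g2Lift_b,
      map_c_one_last π hc ha hm]
  · rw [hφc_right i hi2 hi', g2Lift_c hn π hc ha (by omega) (by omega),
      map_c_last_right π hc ha hi2 him]

theorem g2Lift_comp (hφ : G2Spec g n φ) (hm : 2 ≤ 2 * g + n - 2) :
    (g2Lift hn π hc ha).comp φ = π := by
  have ⟨_, _, hφb, hφbI, _⟩ := hφ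
  refine PresentedGroup.ext fun x => ?_
  rw [MonoidHom.comp_apply]
  cases x with
  | beta => exact (congrArg _ hφb).trans (g2Lift_b hn π hc ha)
  | betaI s hs => rw [of_betaI hs, hφbI s hs.1 hs.2, g2Lift_bI hn π hc ha hs]
  | alpha i hi => rw [of_alpha hi, g2Lift_map_a hn π hc ha hφ hm hi.1 hi.2]
  | gamma i j h =>
    rw [of_gamma h, g2Lift_map_c hn π hc ha hφ hm h.1.1 h.1.2 h.2.1.1 h.2.1.2 h.2.2]

end Descent

theorem b_one_zero_pow_ne_one {k : ℕ} (hk : k ≠ 0) : b 1 0 ^ k ≠ 1 := by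
  have hrels : ∀ r ∈ {r : FreeGroup (Gen 1 0) | IsRel 1 0 r},
      FreeGroup.lift (fun _ => Multiplicative.ofAdd (1 : ℤ)) r = 1 := by
    intro r hr
    cases hr with
    | handle s hs => omega
    | comm x y _ => simp only [map_mul, map_inv, FreeGroup.lift_apply_of]; group
    | braid x y _ => simp only [map_mul, map_inv, FreeGroup.lift_apply_of]; group
    | star i j k h => unfold Good at h; omega
  intro hb
  have := congrArg Multiplicative.toAdd (congrArg (PresentedGroup.toGroup hrels) hb)
  simp [b, PresentedGroup.toGroup.of, hk] at this

theorem not_g2Spec_one_one (φ : G 1 1 →* G 1 0) : ¬G2Spec 1 1 φ := by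
  rintro ⟨-, -, -, -, -, -, -, hφc, -⟩
  have ha : a 1 0 1 = 1 := by simp [a]
  norm_num [c_self, ha] at hφc
  exact b_one_zero_pow_ne_one (by norm_num) hφc.symm

theorem normalClosure_le_ker {g n : ℕ} {φ : G g n →* G g (n - 1)} (hφ : G2Spec g n φ)
    (hm : 2 ≤ 2 * g + n - 2) :
    Subgroup.normalClosure {c g n (2 * g + n - 2) 1, a g n 1 * (a g n (2 * g + n - 2))⁻¹} ≤
      φ.ker := by
  obtain ⟨hφa, hφam, -, -, -, -, -, -, hφd⟩ := hφ
  refine Subgroup.normalClosure_le_normal ?_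
  rintro x (rfl | rfl)
  · exact hφd
  · rw [SetLike.mem_coe, MonoidHom.mem_ker, map_mul, map_inv, hφa 1 le_rfl (by omega), hφam,
      mul_inv_cancel]

/-- For all `g ≥ 1` and `n ≥ 1`, the kernel of `g_2 : G_{g,n} → G_{g,n-1}`
is normally generated in `G_{g,n}` by the two elements `d_n = c_{m,1}` and
`x_0 = a_1 a_m⁻¹` (where `m = 2g+n-2`). -/
theorem ker_g2_normally_generated (g n : ℕ) (hg : 1 ≤ g) (hn : 1 ≤ n)
    (φ : G g n →* G g (n - 1)) (hφ : G2Spec g n φ) :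
    MonoidHom.ker φ =
      Subgroup.normalClosure
        {c g n (2 * g + n - 2) 1, a g n 1 * (a g n (2 * g + n - 2))⁻¹} := by
  obtain hm | hm := Nat.lt_or_ge (2 * g + n - 2) 2
  · obtain ⟨rfl, rfl⟩ : g = 1 ∧ n = 1 := by omega
    exact (not_g2Spec_one_one φ hφ).elim
  set N := Subgroup.normalClosure {c g n (2 * g + n - 2) 1, a g n 1 * (a g n (2 * g + n - 2))⁻¹}
  have hc : QuotientGroup.mk' N (c g n (2 * g + n - 2) 1) = 1 :=
    (QuotientGroup.eq_one_iff _).mpr (Subgroup.subset_normalClosure (by simp))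
  have ha : QuotientGroup.mk' N (a g n 1) = QuotientGroup.mk' N (a g n (2 * g + n - 2)) :=
    QuotientGroup.eq_iff_div_mem.mpr (Subgroup.subset_normalClosure (by simp [div_eq_mul_inv]))
  exact le_antisymm (ker_le_of_comp_eq_mk' φ _ (g2Lift_comp hn _ hc ha hφ hm))
    (normalClosure_le_ker hφ hm)

end Gervais
end
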